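/- For complex q, z with |q| < 1 and |zq| < 1, Σ_{n≥0} zⁿ q^{n²+n} / (q; q²)_{n+1} = Σ_{n≥0} (−zq; q²)_n qⁿ. -/

import Mathlib

open scoped BigOperators

/-- Finite q-Pochhammer symbol `(a; q)_n`. -/
noncomputable def qPoch (a q : ℂ) (n : ℕ) : ℂ :=
  ∏ k ∈ Finset.range n, (1 - a * q ^ k)

/-- Infinite q-Pochhammer symbol `(a; q)_∞`. -/
noncomputable def qPochInf (a q : ℂ) : ℂ :=
  ∏' k : ℕ, (1 - a * q ^ k)

/-!
As functions of `z`, both sides satisfy `Φ(z) = 1 + q (1 + z q) Φ(z q²)`: for the right-hand side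
this is the shift `n ↦ n + 1`, for the left-hand side it follows termwise after splitting each term
along `1 = q^{2n+1} + (1 - q^{2n+1})`. Iterating, the difference `D` satisfies
`D(z) = q^N (-zq; q²)_N D(z q^{2N})`; both series are bounded on discs and `(-zq; q²)_N` is bounded
in `N`, so `D(z) = O(|q|^N)`, i.e. `D(z) = 0`.
-/

open Filter Topology

lemma qPoch_succ (a p : ℂ) (n : ℕ) : qPoch a p (n + 1) = qPoch a p n * (1 - a * p ^ n) :=
  Finset.prod_range_succ _ n

lemma qPoch_succ' (a p : ℂ) (n : ℕ) : qPoch a p (n + 1) = (1 - a) * qPoch (a * p) p n := by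
  simp only [qPoch, Finset.prod_range_succ', pow_succ', pow_zero, mul_one, mul_assoc]
  ring

lemma pow_le_norm_qPoch {a p : ℂ} (ha : ‖a‖ ≤ 1) (hp : ‖p‖ ≤ 1) (n : ℕ) :
    (1 - ‖a‖) ^ n ≤ ‖qPoch a p n‖ := by
  rw [qPoch, norm_prod]
  calc (1 - ‖a‖) ^ n = ∏ _k ∈ Finset.range n, (1 - ‖a‖) := by
        rw [Finset.prod_const, Finset.card_range]
    _ ≤ ∏ k ∈ Finset.range n, ‖1 - a * p ^ k‖ := by
        refine Finset.prod_le_prod (fun _ _ => sub_nonneg.mpr ha) fun k _ => ?_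
        calc 1 - ‖a‖ ≤ ‖(1 : ℂ)‖ - ‖a * p ^ k‖ := by
              rw [norm_one, norm_mul, norm_pow]
              gcongr
              exact mul_le_of_le_one_right (norm_nonneg a) (pow_le_one₀ (norm_nonneg p) hp)
          _ ≤ ‖1 - a * p ^ k‖ := norm_sub_norm_le _ _

lemma qPoch_ne_zero {a p : ℂ} (ha : ‖a‖ < 1) (hp : ‖p‖ ≤ 1) (n : ℕ) : qPoch a p n ≠ 0 :=
  norm_pos_iff.mp <| (pow_pos (sub_pos.mpr ha) n).trans_le (pow_le_norm_qPoch ha.le hp n)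

lemma norm_qPoch_le_exp {a p : ℂ} {A : ℝ} (ha : ‖a‖ ≤ A) (hp : ‖p‖ < 1) (n : ℕ) :
    ‖qPoch a p n‖ ≤ Real.exp (A / (1 - ‖p‖)) := by
  have hA : 0 ≤ A := (norm_nonneg a).trans ha
  calc ‖qPoch a p n‖ ≤ ∏ k ∈ Finset.range n, (1 + A * ‖p‖ ^ k) := by
        rw [qPoch, norm_prod]
        refine Finset.prod_le_prod (fun _ _ => norm_nonneg _) fun k _ => ?_
        refine (norm_sub_le _ _).trans ?_
        rw [norm_one, norm_mul, norm_pow]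
        gcongr
    _ ≤ Real.exp (∑ k ∈ Finset.range n, A * ‖p‖ ^ k) :=
        Real.prod_one_add_le_exp_sum _ fun k => by positivity
    _ ≤ Real.exp (A / (1 - ‖p‖)) := by
        rw [Real.exp_le_exp, ← Finset.mul_sum, Finset.range_eq_Ico]
        calc A * ∑ k ∈ Finset.Ico 0 n, ‖p‖ ^ k ≤ A * (‖p‖ ^ 0 / (1 - ‖p‖)) := by
              gcongr
              exact geom_sum_Ico_le_of_lt_one (norm_nonneg p) hp
          _ = A / (1 - ‖p‖) := by rw [pow_zero, mul_one_div]

lemma summable_pow_mul_pow_sq {C r : ℝ} (hr₀ : 0 ≤ r) (hr : r < 1) :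
    Summable fun n : ℕ => C ^ n * r ^ (n ^ 2) := by
  have hlim : Tendsto (fun n : ℕ => |C| * r ^ n) atTop (𝓝 0) := by
    simpa using (tendsto_pow_atTop_nhds_zero_of_lt_one hr₀ hr).const_mul |C|
  refine summable_of_ratio_norm_eventually_le (by norm_num : (1 / 2 : ℝ) < 1) ?_
  filter_upwards [hlim.eventually (ge_mem_nhds (by norm_num : (0 : ℝ) < 1 / 2))] with n hn
  have hr₁ : r ^ (n + 1) ≤ 1 := pow_le_one₀ hr₀ hr.le
  calc ‖C ^ (n + 1) * r ^ ((n + 1) ^ 2)‖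
      = (|C| * r ^ n) * r ^ (n + 1) * ‖C ^ n * r ^ (n ^ 2)‖ := by
        simp only [Real.norm_eq_abs, abs_mul, abs_pow, abs_of_nonneg hr₀]
        ring
    _ ≤ 1 / 2 * 1 * ‖C ^ n * r ^ (n ^ 2)‖ := by gcongr
    _ = 1 / 2 * ‖C ^ n * r ^ (n ^ 2)‖ := by rw [mul_one]

noncomputable def quadTerm (q w : ℂ) (n : ℕ) : ℂ :=
  w ^ n * q ^ (n ^ 2 + n) / qPoch q (q ^ 2) (n + 1)

noncomputable def nuTerm (q w : ℂ) (n : ℕ) : ℂ :=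
  qPoch (-(w * q)) (q ^ 2) n * q ^ n

section Series

variable {q : ℂ}

lemma norm_sq_lt_one (hq : ‖q‖ < 1) : ‖q ^ 2‖ < 1 := by
  rw [norm_pow]
  exact pow_lt_one₀ (norm_nonneg q) hq two_ne_zero

lemma qPoch_odd_ne_zero (hq : ‖q‖ < 1) (n : ℕ) : qPoch q (q ^ 2) n ≠ 0 :=
  qPoch_ne_zero hq (norm_sq_lt_one hq).le n

lemma norm_quadTerm_le (hq : ‖q‖ < 1) {w : ℂ} {R : ℝ} (hw : ‖w‖ ≤ R) (n : ℕ) :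
    ‖quadTerm q w n‖ ≤ (1 - ‖q‖)⁻¹ * ((R * ‖q‖ / (1 - ‖q‖)) ^ n * ‖q‖ ^ (n ^ 2)) := by
  have hR : 0 ≤ R := (norm_nonneg w).trans hw
  have h₁ : 0 < 1 - ‖q‖ := sub_pos.mpr hq
  have hP := pow_le_norm_qPoch hq.le (norm_sq_lt_one hq).le (n + 1)
  rw [quadTerm, norm_div, norm_mul, norm_pow, norm_pow, div_le_iff₀ ((pow_pos h₁ _).trans_le hP)]
  calc ‖w‖ ^ n * ‖q‖ ^ (n ^ 2 + n)
      ≤ R ^ n * ‖q‖ ^ (n ^ 2 + n) := by gcongr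
    _ = (1 - ‖q‖)⁻¹ * ((R * ‖q‖ / (1 - ‖q‖)) ^ n * ‖q‖ ^ (n ^ 2)) * (1 - ‖q‖) ^ (n + 1) := by
        have hc : 1 - ‖q‖ ≠ 0 := h₁.ne'
        rw [div_pow, pow_succ]
        field_simp
        ring
    _ ≤ _ := by gcongr

lemma summable_quadTerm (hq : ‖q‖ < 1) (w : ℂ) : Summable (quadTerm q w) :=
  ((summable_pow_mul_pow_sq (norm_nonneg q) hq).mul_left _).of_norm_bounded
    (norm_quadTerm_le hq le_rfl)

lemma exists_bound_tsum_quadTerm (hq : ‖q‖ < 1) (R : ℝ) :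
    ∃ M, ∀ w : ℂ, ‖w‖ ≤ R → ‖∑' n, quadTerm q w n‖ ≤ M :=
  ⟨_, fun _ hw => tsum_of_norm_bounded
    ((summable_pow_mul_pow_sq (norm_nonneg q) hq).mul_left _).hasSum (norm_quadTerm_le hq hw)⟩

lemma norm_nuTerm_le (hq : ‖q‖ < 1) {w : ℂ} {R : ℝ} (hw : ‖w‖ ≤ R) (n : ℕ) :
    ‖nuTerm q w n‖ ≤ Real.exp (R * ‖q‖ / (1 - ‖q ^ 2‖)) * ‖q‖ ^ n := by
  rw [nuTerm, norm_mul, norm_pow]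
  gcongr
  refine norm_qPoch_le_exp ?_ (norm_sq_lt_one hq) n
  rw [norm_neg, norm_mul]
  gcongr

lemma summable_nuTerm (hq : ‖q‖ < 1) (w : ℂ) : Summable (nuTerm q w) :=
  ((summable_geometric_of_lt_one (norm_nonneg q) hq).mul_left _).of_norm_bounded
    (norm_nuTerm_le hq le_rfl)

lemma exists_bound_tsum_nuTerm (hq : ‖q‖ < 1) (R : ℝ) :
    ∃ M, ∀ w : ℂ, ‖w‖ ≤ R → ‖∑' n, nuTerm q w n‖ ≤ M :=
  ⟨_, fun _ hw => tsum_of_norm_bounded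
    ((summable_geometric_of_lt_one (norm_nonneg q) hq).mul_left _).hasSum (norm_nuTerm_le hq hw)⟩

lemma nuTerm_succ (w : ℂ) (n : ℕ) :
    nuTerm q w (n + 1) = (q + w * q ^ 2) * nuTerm q (w * q ^ 2) n := by
  rw [nuTerm, nuTerm, qPoch_succ', show -(w * q) * q ^ 2 = -(w * q ^ 2 * q) by ring]
  ring

lemma tsum_nuTerm_eq (hq : ‖q‖ < 1) (w : ℂ) :
    ∑' n, nuTerm q w n = 1 + (q + w * q ^ 2) * ∑' n, nuTerm q (w * q ^ 2) n := by
  rw [(summable_nuTerm hq w).tsum_eq_zero_add, tsum_congr (nuTerm_succ w), tsum_mul_left]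
  simp [nuTerm, qPoch]

lemma quadTerm_zero_sub (hq : ‖q‖ < 1) (w : ℂ) :
    quadTerm q w 0 - q * quadTerm q (w * q ^ 2) 0 = 1 := by
  have h₁ : qPoch q (q ^ 2) 1 = 1 - q := by simp [qPoch]
  have h : 1 - q ≠ 0 := h₁ ▸ qPoch_odd_ne_zero hq 1
  simp only [quadTerm, zero_add, h₁]
  field_simp
  ring

lemma quadTerm_succ_sub (hq : ‖q‖ < 1) (w : ℂ) (n : ℕ) :
    quadTerm q w (n + 1) - q * quadTerm q (w * q ^ 2) (n + 1)
      = w * q ^ 2 * quadTerm q (w * q ^ 2) n := by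
  have h := qPoch_odd_ne_zero hq (n + 2)
  rw [qPoch_succ, mul_ne_zero_iff] at h
  obtain ⟨hP, hfac⟩ := h
  rw [quadTerm, quadTerm, quadTerm, qPoch_succ _ _ (n + 1)]
  field_simp
  ring

lemma tsum_quadTerm_eq (hq : ‖q‖ < 1) (w : ℂ) :
    ∑' n, quadTerm q w n = 1 + (q + w * q ^ 2) * ∑' n, quadTerm q (w * q ^ 2) n := by
  have hs := summable_quadTerm hq w
  have hs' := (summable_quadTerm hq (w * q ^ 2)).mul_left q
  have hdiff : ∑' n, quadTerm q w n - q * ∑' n, quadTerm q (w * q ^ 2) n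
      = 1 + w * q ^ 2 * ∑' n, quadTerm q (w * q ^ 2) n := by
    rw [← tsum_mul_left, ← hs.tsum_sub hs', (hs.sub hs').tsum_eq_zero_add]
    simp only [quadTerm_zero_sub hq, quadTerm_succ_sub hq, tsum_mul_left]
  linear_combination hdiff

end Series

lemma eq_zero_of_eq_mul_comp_mul_sq {D : ℂ → ℂ} {q z : ℂ} {M : ℝ} (hq : ‖q‖ < 1)
    (hD : ∀ w, D w = (q + w * q ^ 2) * D (w * q ^ 2)) (hM : ∀ w, ‖w‖ ≤ ‖z‖ → ‖D w‖ ≤ M) :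
    D z = 0 := by
  have hq2 := norm_sq_lt_one hq
  have iterate (N : ℕ) : D z = q ^ N * qPoch (-(z * q)) (q ^ 2) N * D (z * (q ^ 2) ^ N) := by
    induction N with
    | zero => simp [qPoch]
    | succ N ih =>
      rw [ih, hD (z * (q ^ 2) ^ N), qPoch_succ,
        show z * (q ^ 2) ^ N * q ^ 2 = z * (q ^ 2) ^ (N + 1) by ring]
      ring
  set E := Real.exp (‖z * q‖ / (1 - ‖q ^ 2‖))
  have bound (N : ℕ) : ‖D z‖ ≤ ‖q‖ ^ N * (E * M) := by
    have hw : ‖z * (q ^ 2) ^ N‖ ≤ ‖z‖ := by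
      rw [norm_mul, norm_pow]
      exact mul_le_of_le_one_right (norm_nonneg z) (pow_le_one₀ (norm_nonneg _) hq2.le)
    have hDw := hM _ hw
    have hP := norm_qPoch_le_exp (norm_neg (z * q)).le hq2 N
    rw [iterate N, norm_mul, norm_mul, norm_pow, mul_assoc]
    have hM₀ : 0 ≤ M := (norm_nonneg _).trans hDw
    gcongr
  have hlim : Tendsto (fun N : ℕ => ‖q‖ ^ N * (E * M)) atTop (𝓝 0) := by
    simpa using (tendsto_pow_atTop_nhds_zero_of_lt_one (norm_nonneg q) hq).mul_const (E * M)
  exact norm_le_zero_iff.mp (ge_of_tendsto' hlim bound)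

theorem nu_y_one_general (q z : ℂ) (hq : ‖q‖ < 1) :
    ∑' n : ℕ, z ^ n * q ^ (n ^ 2 + n) / qPoch q (q ^ 2) (n + 1)
      = ∑' n : ℕ, qPoch (-(z * q)) (q ^ 2) n * q ^ n := by
  obtain ⟨M₁, hM₁⟩ := exists_bound_tsum_quadTerm hq ‖z‖
  obtain ⟨M₂, hM₂⟩ := exists_bound_tsum_nuTerm hq ‖z‖
  refine sub_eq_zero.mp <| eq_zero_of_eq_mul_comp_mul_sq
    (D := fun w => ∑' n, quadTerm q w n - ∑' n, nuTerm q w n) hq (fun w => ?_)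
    (fun w hw => (norm_sub_le _ _).trans (add_le_add (hM₁ w hw) (hM₂ w hw)))
  rw [tsum_quadTerm_eq hq w, tsum_nuTerm_eq hq w]
  ring

theorem nu_y_one (q z : ℂ) (hq : ‖q‖ < 1) (hzq : ‖z * q‖ < 1) :
    ∑' n : ℕ, z ^ n * q ^ (n ^ 2 + n) / qPoch q (q ^ 2) (n + 1)
      = ∑' n : ℕ, qPoch (-(z * q)) (q ^ 2) n * q ^ n :=
  nu_y_one_general q z hq
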